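/- Let A = (a_{ji}) be an s×r matrix over a commutative ring with r + 1 ≤ s. Fix m ∈ {1,...,r} and a (g−1)-subset {p₁<...<p_{g−1}} of {1,...,s} where g = s − r, with complement {q₁<...<q_{r+1}}. Let s_i denote the position of q_i in the ordered set {p₁,...,p_{g−1}, q_i}. Then Σ_{i=1}^{r+1} (−1)^{q_i + s_i} A_{1,...,r}^{q₁,...,q̂_i,...,q_{r+1}} a_{m,q_i} = 0, where A_{1,...,r}^{q₁,...,q̂_i,...,q_{r+1}} is the maximal minor of A on the columns {q₁,...,q_{r+1}} \ {q_i}. -/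
import Mathlib

/-- The number of elements of `t` below the `j`-th element of `t` is `j`. -/
lemma stmt9_aux_filter {α : Type*} [LinearOrder α] [DecidableEq α] (t : Finset α) {k : ℕ}
    (h : t.card = k) (j : Fin k) :
    (t.filter (· < t.orderEmbOfFin h j)).card = j := by
  classical
  have himg : t.filter (· < t.orderEmbOfFin h j) = (Finset.Iio j).image (t.orderEmbOfFin h) := by
    ext x
    simp only [Finset.mem_filter, Finset.mem_image, Finset.mem_Iio]
    constructor
    · rintro ⟨hx, hlt⟩
      have hx' : x ∈ Set.range (t.orderEmbOfFin h) := by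
        rw [Finset.range_orderEmbOfFin]; exact hx
      obtain ⟨i, rfl⟩ := hx'
      exact ⟨i, (t.orderEmbOfFin h).strictMono.lt_iff_lt.mp hlt, rfl⟩
    · rintro ⟨i, hij, rfl⟩
      exact ⟨Finset.orderEmbOfFin_mem t h i, (t.orderEmbOfFin h).strictMono hij⟩
  rw [himg, Finset.card_image_of_injective _ (t.orderEmbOfFin h).injective, Fin.card_Iio]

/-- The key determinantal identity behind Lemma 3.3: let `a` be an `r × s` matrix of
coefficients (`r + 1 ≤ s`), fix a row index `m` and a `(g−1)`-subset `P` of the column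
indices, where `g = s − r`, with complement `Q = {q₁ < … < q_{r+1}}`.  Letting `s_i` be the
position of `q_i` in the ordered set `P ∪ {q_i}`, the alternating sum
`Σ_i (−1)^{q_i + s_i} A_{1,…,r}^{Q∖{q_i}} a_{m,q_i}` vanishes, where
`A_{1,…,r}^{Q∖{q_i}}` is the maximal minor of `a` on the columns `Q ∖ {q_i}`. -/
theorem stmt9 {R : Type} [CommRing R] (r s : ℕ) (hrs : r + 1 ≤ s)
    (a : Fin r → Fin s → R) (m : Fin r)
    (P : Finset (Fin s)) (hP : P.card = (s - r) - 1) :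
    ∑ q : Fin s,
      (if h : q ∉ P then
        (-1 : R) ^ (((q : ℕ) + 1) + ((P.filter (· < q)).card + 1)) *
          Matrix.det (Matrix.of fun j k : Fin r =>
            a j (((Pᶜ.erase q).orderIsoOfFin
              (by
                rw [Finset.card_erase_of_mem (Finset.mem_compl.mpr h),
                  Finset.card_compl, Fintype.card_fin, hP]
                omega) k : Fin s))) * a m q
      else 0) = 0 := by
  classical
  have hQ : Pᶜ.card = r + 1 := by
    rw [Finset.card_compl, Fintype.card_fin, hP]; omega
  set σ : Fin (r + 1) ↪o Fin s := Pᶜ.orderEmbOfFin hQ with hσdef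
  have hσmem : ∀ j, σ j ∈ Pᶜ := fun j => Finset.orderEmbOfFin_mem _ hQ j
  -- the `(r+1) × (r+1)` matrix with row `m` repeated
  set M : Matrix (Fin (r + 1)) (Fin (r + 1)) R :=
    Matrix.of (fun i k => a (Fin.lastCases m (fun i => i) i) (σ k)) with hMdef
  have hdet : M.det = 0 := by
    apply Matrix.det_zero_of_row_eq (i := Fin.castSucc m) (j := Fin.last r)
      (Fin.ne_of_lt (Fin.castSucc_lt_last m))
    funext k
    simp [hMdef]
  rw [Matrix.det_succ_row M (Fin.last r)] at hdet
  -- identify the `erase` order iso with `σ ∘ succAbove`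
  have herase : ∀ (j : Fin (r + 1)) (h' : (Pᶜ.erase (σ j)).card = r) (k : Fin r),
      ((Pᶜ.erase (σ j)).orderIsoOfFin h' k : Fin s) = σ (j.succAbove k) := by
    intro j h' k
    rw [Finset.coe_orderIsoOfFin_apply]
    have huniq := Finset.orderEmbOfFin_unique h' (f := fun k => σ (j.succAbove k))
      (fun k => Finset.mem_erase.mpr ⟨σ.injective.ne (Fin.succAbove_ne j k), hσmem _⟩)
      (σ.strictMono.comp (Fin.strictMono_succAbove j))
    exact (congrFun huniq k).symm
  -- reindex the sum over `Fin s` as a sum over `Fin (r+1)` via `σ`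
  have himage : Finset.univ.map σ.toEmbedding = Pᶜ := by
    ext x
    simp only [Finset.mem_map, Finset.mem_univ, true_and]
    constructor
    · rintro ⟨j, rfl⟩; exact hσmem j
    · intro hx
      have : x ∈ Set.range σ := by
        rw [hσdef]; rw [Finset.range_orderEmbOfFin]; exact hx
      obtain ⟨j, rfl⟩ := this
      exact ⟨j, rfl⟩
  set f : Fin s → R := fun q =>
      (if h : q ∉ P then
        (-1 : R) ^ (((q : ℕ) + 1) + ((P.filter (· < q)).card + 1)) *
          Matrix.det (Matrix.of fun j k : Fin r =>
            a j (((Pᶜ.erase q).orderIsoOfFin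
              (by
                rw [Finset.card_erase_of_mem (Finset.mem_compl.mpr h),
                  Finset.card_compl, Fintype.card_fin, hP]
                omega) k : Fin s))) * a m q
      else 0) with hfdef
  have hstep1 : ∑ q : Fin s, f q = ∑ q ∈ Pᶜ, f q := by
    refine (Finset.sum_subset (Finset.subset_univ _) ?_).symm
    intro q _ hq
    simp only [Finset.mem_compl, not_not] at hq
    exact dif_neg (by simpa using hq)
  have hstep2 : ∑ q ∈ Pᶜ, f q = ∑ j : Fin (r + 1), f (σ j) := by
    rw [← himage, Finset.sum_map]
    rfl
  -- the count of all elements below `σ j`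
  have hcount : ∀ j : Fin (r + 1),
      ((σ j : Fin s) : ℕ) = (P.filter (· < σ j)).card + (j : ℕ) := by
    intro j
    have h1 : ((Finset.univ : Finset (Fin s)).filter (· < σ j)).card = ((σ j : Fin s) : ℕ) := by
      have : (Finset.univ : Finset (Fin s)).filter (· < σ j) = Finset.Iio (σ j) := by
        ext x; simp
      rw [this, Fin.card_Iio]
    have h2 : (Finset.univ : Finset (Fin s)).filter (· < σ j)
        = P.filter (· < σ j) ∪ Pᶜ.filter (· < σ j) := by
      rw [← Finset.filter_union, Finset.union_compl]
    have h3 : Disjoint (P.filter (· < σ j)) (Pᶜ.filter (· < σ j)) :=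
      Disjoint.mono (Finset.filter_subset _ _) (Finset.filter_subset _ _)
        disjoint_compl_right
    have h4 : (Pᶜ.filter (· < σ j)).card = (j : ℕ) := stmt9_aux_filter Pᶜ hQ j
    rw [← h1, h2, Finset.card_union_of_disjoint h3, h4]
  -- compute each term
  have hterm : ∀ j : Fin (r + 1),
      f (σ j) = (-1 : R) ^ (r : ℕ)
        * ((-1 : R) ^ ((Fin.last r : ℕ) + (j : ℕ)) * M (Fin.last r) j
            * (M.submatrix (Fin.last r).succAbove j.succAbove).det) := by
    intro j
    have hnP : σ j ∉ P := Finset.mem_compl.mp (hσmem j)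
    rw [hfdef]
    simp only
    rw [dif_pos hnP]
    have hMentry : M (Fin.last r) j = a m (σ j) := by simp [hMdef]
    have hsub : (M.submatrix (Fin.last r).succAbove j.succAbove)
        = Matrix.of (fun j' k : Fin r => a j' ((((Pᶜ.erase (σ j)).orderIsoOfFin
            (by
              rw [Finset.card_erase_of_mem (hσmem j), hQ]
              omega) k : Fin s)))) := by
      funext i k
      simp only [Matrix.submatrix_apply, Matrix.of_apply]
      rw [herase j _ k]
      simp [hMdef, Fin.succAbove_last]
    have hdetEq : Matrix.det (Matrix.of fun j' k : Fin r =>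
        a j' (((Pᶜ.erase (σ j)).orderIsoOfFin
          (by
            rw [Finset.card_erase_of_mem (Finset.mem_compl.mpr hnP),
              Finset.card_compl, Fintype.card_fin, hP]
            omega) k : Fin s)))
        = (M.submatrix (Fin.last r).succAbove j.succAbove).det := by
      rw [hsub]
    rw [hdetEq, hMentry]
    -- now only signs remain
    have hsign : (-1 : R) ^ ((((σ j : Fin s) : ℕ) + 1) + ((P.filter (· < σ j)).card + 1))
        = (-1 : R) ^ (r : ℕ) * (-1 : R) ^ ((Fin.last r : ℕ) + (j : ℕ)) := by
      rw [hcount j, Fin.val_last, ← pow_add]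
      have h5 : ((P.filter (· < σ j)).card + (j : ℕ) + 1) + ((P.filter (· < σ j)).card + 1)
          = 2 * ((P.filter (· < σ j)).card + 1) + (j : ℕ) := by ring
      have h6 : r + (r + (j : ℕ)) = 2 * r + (j : ℕ) := by ring
      rw [h5, h6, pow_add, pow_add, pow_mul, pow_mul, neg_one_sq, one_pow, one_pow, one_mul]
    rw [hsign]
    ring
  calc ∑ q : Fin s, f q = ∑ j : Fin (r + 1), f (σ j) := by rw [hstep1, hstep2]
    _ = (-1 : R) ^ (r : ℕ) * ∑ j : Fin (r + 1),
          (-1 : R) ^ ((Fin.last r : ℕ) + (j : ℕ)) * M (Fin.last r) j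
            * (M.submatrix (Fin.last r).succAbove j.succAbove).det := by
        rw [Finset.mul_sum]
        exact Finset.sum_congr rfl fun j _ => hterm j
    _ = 0 := by rw [hdet, mul_zero]
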